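/- Let (K, δ) be a differential field, P a nonzero prime differential ideal of K{x}, and f an irreducible element of P of minimal rank. If the separant of f is zero, then all partial derivatives ∂f/∂xᵢ for i = 0, ..., ord f belong to P. -/

import Mathlib

/-!
Let `n = ord f`. Since `∂f/∂xₙ = 0`, the `xₙ₊₁`-term of `D f` vanishes, so `ord (D f) ≤ n`.
Pseudo-dividing `D f` by `f` in `xₙ` gives `w ^ m * D f = q * f + r`, where the leading
coefficient `w` and the remainder `r` have rank below that of `f`. As `r ∈ P`, minimality gives
`r = 0`, and `w ∉ P`; since `f` is prime, `f ∣ D f`. Finally the commutation rule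
`∂ⱼ₊₁ (D g) = D (∂ⱼ₊₁ g) + ∂ⱼ g` descends from `∂ₙ f = 0 ∈ P` to every `∂ᵢ f ∈ P`.
-/

set_option synthInstance.maxHeartbeats 1000000
set_option maxHeartbeats 1000000

open MvPolynomial
noncomputable section
variable {K : Type*} [Field K]

/-- order of a differential polynomial -/
def ordOf (f : MvPolynomial ℕ K) : ℕ := f.vars.sup id

/-- separant -/
def sep (f : MvPolynomial ℕ K) : MvPolynomial ℕ K := pderiv (ordOf f) f

/-- rank of a differential polynomial -/
def rankOf (f : MvPolynomial ℕ K) : ℕ × ℕ := (ordOf f, f.degreeOf (ordOf f))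

/-- the differential ideal generated by f -/
def diffIdeal (D : Derivation ℤ (MvPolynomial ℕ K) (MvPolynomial ℕ K))
    (f : MvPolynomial ℕ K) : Ideal (MvPolynomial ℕ K) :=
  Ideal.span (Set.range fun n : ℕ => (⇑D)^[n] f)

/-- saturation I : s^∞ -/
def saturation {R : Type*} [CommRing R] (J : Ideal R) (s : R) : Ideal R where
  carrier := {h | ∃ m : ℕ, s ^ m * h ∈ J}
  zero_mem' := ⟨0, by simp⟩
  add_mem' := by
    rintro a b ⟨m, hm⟩ ⟨n, hn⟩
    refine ⟨m + n, ?_⟩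
    have h : s ^ (m + n) * (a + b) = s ^ n * (s ^ m * a) + s ^ m * (s ^ n * b) := by ring
    rw [h]
    exact J.add_mem (J.mul_mem_left _ hm) (J.mul_mem_left _ hn)
  smul_mem' := by
    rintro c a ⟨m, hm⟩
    refine ⟨m, ?_⟩
    have h : s ^ m * (c • a) = c * (s ^ m * a) := by rw [smul_eq_mul]; ring
    rw [h]
    exact J.mul_mem_left _ hm

/-- evaluation of a differential polynomial at a point of K -/
def evalD (δ : Derivation ℤ K K) (a : K) (f : MvPolynomial ℕ K) : K :=
  MvPolynomial.eval (fun n => (⇑δ)^[n] a) f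

/-- the field of constants -/
def constants (δ : Derivation ℤ K K) : Subfield K where
  carrier := {a | δ a = 0}
  zero_mem' := by simp
  one_mem' := by simp
  add_mem' := by intro a b ha hb; simp only [Set.mem_setOf_eq] at *; rw [map_add, ha, hb, add_zero]
  mul_mem' := by
    intro a b ha hb; simp only [Set.mem_setOf_eq] at *
    rw [Derivation.leibniz, ha, hb]; simp
  neg_mem' := by intro a ha; simp only [Set.mem_setOf_eq] at *; rw [map_neg, ha, neg_zero]
  inv_mem' := by
    intro a ha
    simp only [Set.mem_setOf_eq] at *
    rcases eq_or_ne a 0 with rfl | h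
    · simp
    · have h1 : a * a⁻¹ = 1 := mul_inv_cancel₀ h
      have h2 : δ (a * a⁻¹) = 0 := by rw [h1]; exact δ.map_one_eq_zero
      rw [Derivation.leibniz, ha] at h2
      simp only [smul_eq_mul, mul_zero, add_zero, zero_mul, smul_zero] at h2
      exact (mul_eq_zero.mp h2).resolve_left h

/-- the SDCF axiom scheme -/
def SDCFAx (δ : Derivation ℤ K K) : Prop :=
  ∀ f g : MvPolynomial ℕ K, f ≠ 0 → g ≠ 0 → sep f ≠ 0 → ordOf g < ordOf f →
    ∃ a : K, evalD δ a f = 0 ∧ evalD δ a g ≠ 0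

theorem Polynomial.exists_C_leadingCoeff_pow_mul_eq_mul_add {R : Type*} [CommRing R] [IsDomain R]
    {F : Polynomial R} (hF : F ≠ 0) (G : Polynomial R) :
    ∃ (m : ℕ) (q r : Polynomial R),
      Polynomial.C F.leadingCoeff ^ m * G = q * F + r ∧ r.degree < F.degree := by
  open Polynomial in
  induction G using Polynomial.degree_lt_wf.induction with
  | _ G ih =>
    by_cases hlt : G.degree < F.degree
    · exact ⟨0, 0, G, by simp, hlt⟩
    have hG : G ≠ 0 := by rintro rfl; exact hlt (by simpa [bot_lt_iff_ne_bot] using hF)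
    have hle : F.natDegree ≤ G.natDegree := natDegree_le_natDegree (not_lt.mp hlt)
    set T := C G.leadingCoeff * X ^ (G.natDegree - F.natDegree) * F
    have hT : (C F.leadingCoeff * G - T).degree < G.degree := by
      have hdeg : (C F.leadingCoeff * G).degree = T.degree := by
        simp only [T, degree_mul, degree_C (leadingCoeff_ne_zero.2 hF),
          degree_C (leadingCoeff_ne_zero.2 hG), degree_X_pow, degree_eq_natDegree hF,
          degree_eq_natDegree hG]
        norm_cast
        omega
      have hlc : (C F.leadingCoeff * G).leadingCoeff = T.leadingCoeff := by
        simp only [T, leadingCoeff_mul, leadingCoeff_C, leadingCoeff_X_pow]; ring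
      simpa [degree_mul, leadingCoeff_ne_zero.2 hF] using
        degree_sub_lt_left hdeg (mul_ne_zero (by simpa using hF) hG) hlc
    obtain ⟨m, q, r, heq, hr⟩ := ih _ hT
    refine ⟨m + 1, q + C F.leadingCoeff ^ m * C G.leadingCoeff * X ^ (G.natDegree - F.natDegree),
      r, ?_, hr⟩
    linear_combination heq

section DifferentialPolynomial

variable {R : Type*} [CommRing R] {δ : Derivation ℤ R R}
  {D : Derivation ℤ (MvPolynomial ℕ R) (MvPolynomial ℕ R)}

theorem pderiv_succ_derivation
    (hDX : ∀ n : ℕ, D (X n) = X (n + 1)) (hDC : ∀ a : R, D (C a) = C (δ a))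
    (j : ℕ) (g : MvPolynomial ℕ R) :
    pderiv (j + 1) (D g) = D (pderiv (j + 1) g) + pderiv j g := by
  induction g using MvPolynomial.induction_on with
  | C a => simp [hDC]
  | add p q hp hq => simp only [map_add, hp, hq]; abel
  | mul_X p i hp =>
    simp only [Derivation.leibniz, smul_eq_mul, map_add, hp, hDX, pderiv_X, Pi.single_apply]
    split_ifs <;> simp_all <;> ring

theorem derivation_sub_pderiv_mul_X_mem_supported
    (hDX : ∀ n : ℕ, D (X n) = X (n + 1)) (hDC : ∀ a : R, D (C a) = C (δ a))
    {n : ℕ} {g : MvPolynomial ℕ R} (hg : g ∈ supported R (Set.Iic n)) :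
    D g - pderiv n g * X (n + 1) ∈ supported R (Set.Iic n) := by
  have hX : ∀ i ≤ n, (X i : MvPolynomial ℕ R) ∈ supported R (Set.Iic n) := fun i hi =>
    Algebra.subset_adjoin (Set.mem_image_of_mem _ hi)
  induction hg using Algebra.adjoin_induction with
  | mem x hx =>
    obtain ⟨i, hi, rfl⟩ := hx
    rcases (Set.mem_Iic.mp hi).lt_or_eq with hi | rfl
    · simpa [hDX, pderiv_X_of_ne hi.ne] using hX (i + 1) hi
    · simp [hDX]
  | algebraMap a =>
    rw [algebraMap_eq, hDC, pderiv_C, zero_mul, sub_zero]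
    exact Subalgebra.algebraMap_mem _ (δ a)
  | add x y _ _ hx hy =>
    convert add_mem hx hy using 1
    simp only [map_add]; ring
  | mul x y hxS hyS hx hy =>
    have hxy : D (x * y) - pderiv n (x * y) * X (n + 1) =
        x * (D y - pderiv n y * X (n + 1)) + y * (D x - pderiv n x * X (n + 1)) := by
      simp only [Derivation.leibniz, smul_eq_mul]; ring
    rw [hxy]
    exact add_mem (mul_mem hxS hy) (mul_mem hyS hx)

theorem pderiv_mem_of_dvd_derivation
    (hDX : ∀ n : ℕ, D (X n) = X (n + 1)) (hDC : ∀ a : R, D (C a) = C (δ a))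
    {P : Ideal (MvPolynomial ℕ R)} (hPdiff : ∀ h ∈ P, D h ∈ P)
    {f : MvPolynomial ℕ R} (hfP : f ∈ P) (hdvd : f ∣ D f) {n : ℕ} (hn : pderiv n f ∈ P) :
    ∀ i ≤ n, pderiv i f ∈ P := by
  refine fun i => Nat.decreasingInduction (motive := fun k _ => pderiv k f ∈ P) ?_ hn
  intro k _ ih
  obtain ⟨h, hh⟩ := hdvd
  have hDf : pderiv (k + 1) (D f) ∈ P := by
    rw [hh, Derivation.leibniz, smul_eq_mul, smul_eq_mul]
    exact add_mem (P.mul_mem_right _ hfP) (P.mul_mem_left _ ih)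
  rw [eq_sub_of_add_eq' (pderiv_succ_derivation hDX hDC k f).symm]
  exact sub_mem hDf (hPdiff _ ih)

end DifferentialPolynomial

theorem ordOf_le_iff_mem_supported {g : MvPolynomial ℕ K} {n : ℕ} :
    ordOf g ≤ n ↔ g ∈ supported K (Set.Iic n) := by
  simp [ordOf, mem_supported, Set.subset_def]

theorem ordOf_derivation_le {δ : Derivation ℤ K K}
    {D : Derivation ℤ (MvPolynomial ℕ K) (MvPolynomial ℕ K)}
    (hDX : ∀ n : ℕ, D (X n) = X (n + 1)) (hDC : ∀ a : K, D (C a) = C (δ a))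
    {g : MvPolynomial ℕ K} {n : ℕ} (hg : ordOf g ≤ n) (hn : pderiv n g = 0) :
    ordOf (D g) ≤ n := by
  rw [ordOf_le_iff_mem_supported] at hg ⊢
  simpa [hn] using derivation_sub_pderiv_mul_X_mem_supported hDX hDC hg

theorem toLex_rankOf_lt {f g : MvPolynomial ℕ K} (hord : ordOf g ≤ ordOf f)
    (hdeg : degreeOf (ordOf f) g < degreeOf (ordOf f) f) : toLex (rankOf g) < toLex (rankOf f) := by
  rw [Prod.Lex.lt_iff]
  rcases hord.lt_or_eq with h | h
  · exact Or.inl h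
  · exact Or.inr ⟨h, by simpa [rankOf, h] using hdeg⟩

theorem Irreducible.degreeOf_ordOf_pos {f : MvPolynomial ℕ K} (hf : Irreducible f) :
    0 < degreeOf (ordOf f) f := by
  have hvars : f.vars.Nonempty := by
    rw [Finset.nonempty_iff_ne_empty, Ne, vars_eq_empty_iff_eq_C]
    intro hC
    have hc : f.coeff 0 ≠ 0 := fun h0 => hf.ne_zero (by rw [hC, h0, C_0])
    exact hf.not_isUnit (hC ▸ (isUnit_iff_ne_zero.mpr hc).map C)
  obtain ⟨i, hi, hsup⟩ := Finset.exists_mem_eq_sup _ hvars id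
  rw [show ordOf f = i from hsup]
  exact Nat.pos_of_ne_zero (mem_vars_iff_degreeOf_ne_zero.mp hi)

/-- `X ↦ xₙ` and `xⱼ ↦ x_{n-1-j}`: `finSuccEquiv` splits off the variable `0`, which `Fin.rev`
sends to `n`. -/
def ofPolynomialIn (n : ℕ) : Polynomial (MvPolynomial (Fin n) K) →ₐ[K] MvPolynomial ℕ K :=
  (rename fun i : Fin (n + 1) => (i.rev : ℕ)).comp (finSuccEquiv K n).symm.toAlgHom

theorem ofPolynomialIn_injective (n : ℕ) : Function.Injective (ofPolynomialIn (K := K) n) :=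
  (rename_injective _ (Fin.val_injective.comp Fin.rev_injective)).comp
    (finSuccEquiv K n).symm.injective

theorem ordOf_ofPolynomialIn_le {n : ℕ} (p : Polynomial (MvPolynomial (Fin n) K)) :
    ordOf (ofPolynomialIn n p) ≤ n := by
  rw [ordOf_le_iff_mem_supported, mem_supported]
  intro i hi
  obtain ⟨j, -, rfl⟩ := Finset.mem_image.mp (vars_rename _ _ hi)
  simp only [Set.mem_Iic, Fin.val_rev]
  omega

theorem degreeOf_ofPolynomialIn {n : ℕ} (p : Polynomial (MvPolynomial (Fin n) K)) :
    degreeOf n (ofPolynomialIn n p) = p.natDegree := by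
  have h := degreeOf_rename_of_injective (p := (finSuccEquiv K n).symm p)
    (Fin.val_injective.comp Fin.rev_injective) 0
  simp only [Function.comp_apply, Fin.rev_zero, Fin.val_last] at h
  calc degreeOf n (ofPolynomialIn n p) = degreeOf 0 ((finSuccEquiv K n).symm p) := h
    _ = p.natDegree := by rw [← natDegree_finSuccEquiv, AlgEquiv.apply_symm_apply]

theorem exists_ofPolynomialIn_eq {n : ℕ} {g : MvPolynomial ℕ K} (hg : ordOf g ≤ n) :
    ∃ p, ofPolynomialIn n p = g := by
  rw [ordOf_le_iff_mem_supported, mem_supported] at hg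
  obtain ⟨q, hq⟩ := exists_rename_eq_of_vars_subset_range g _
    (Fin.val_injective.comp Fin.rev_injective) fun i hi =>
      ⟨Fin.rev ⟨i, Nat.lt_succ_of_le (hg hi)⟩, by simp⟩
  exact ⟨finSuccEquiv K n q, by
    show rename _ ((finSuccEquiv K n).symm (finSuccEquiv K n q)) = g
    rw [AlgEquiv.symm_apply_apply]
    exact hq⟩

theorem dvd_of_mem_of_ordOf_le {P : Ideal (MvPolynomial ℕ K)} {f : MvPolynomial ℕ K}
    (hfP : f ∈ P) (hf : Irreducible f)
    (hmin : ∀ g ∈ P, g ≠ 0 → toLex (rankOf f) ≤ toLex (rankOf g))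
    {g : MvPolynomial ℕ K} (hgP : g ∈ P) (hg : ordOf g ≤ ordOf f) : f ∣ g := by
  set n := ordOf f
  have hsmall : ∀ h ∈ P, ordOf h ≤ n → degreeOf n h < degreeOf n f → h = 0 :=
    fun h hP hord hdeg => by_contra fun h0 => (hmin h hP h0).not_gt (toLex_rankOf_lt hord hdeg)
  obtain ⟨F, hF⟩ := exists_ofPolynomialIn_eq (le_refl n)
  obtain ⟨G, rfl⟩ := exists_ofPolynomialIn_eq hg
  have hF0 : F ≠ 0 := by rintro rfl; exact hf.ne_zero (by rw [← hF, map_zero])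
  have hdegf : degreeOf n f = F.natDegree := by rw [← hF, degreeOf_ofPolynomialIn]
  obtain ⟨m, q, r, hdiv, hr⟩ := Polynomial.exists_C_leadingCoeff_pow_mul_eq_mul_add hF0 G
  set w := ofPolynomialIn n (Polynomial.C F.leadingCoeff)
  have hdiv' : w ^ m * ofPolynomialIn n G = ofPolynomialIn n q * f + ofPolynomialIn n r := by
    simpa only [map_mul, map_pow, map_add, hF] using congrArg (ofPolynomialIn n) hdiv
  have hw : w ∉ P := by
    intro hwP
    refine Polynomial.leadingCoeff_ne_zero.2 hF0 (Polynomial.C_injective ?_)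
    refine ofPolynomialIn_injective n ((hsmall w hwP (ordOf_ofPolynomialIn_le _) ?_).trans ?_)
    · rw [degreeOf_ofPolynomialIn, Polynomial.natDegree_C]
      exact hf.degreeOf_ordOf_pos
    · rw [Polynomial.C_0, map_zero]
  have hr0 : ofPolynomialIn n r = 0 := by
    rcases eq_or_ne r 0 with rfl | hr0
    · exact map_zero _
    refine hsmall _ ?_ (ordOf_ofPolynomialIn_le r) ?_
    · rw [eq_sub_of_add_eq' hdiv'.symm]
      exact sub_mem (P.mul_mem_left _ hgP) (P.mul_mem_left _ hfP)
    · rw [degreeOf_ofPolynomialIn, hdegf]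
      exact Polynomial.natDegree_lt_natDegree hr0 hr
  rw [hr0, add_zero] at hdiv'
  have hprime : Prime f := UniqueFactorizationMonoid.irreducible_iff_prime.mp hf
  refine (hprime.dvd_or_dvd ⟨ofPolynomialIn n q, by rw [hdiv', mul_comm]⟩).resolve_left ?_
  exact fun hfw => hw (P.mem_of_dvd (hprime.dvd_of_dvd_pow hfw) hfP)

theorem stmt7 {K : Type*} [Field K] (δ : Derivation ℤ K K)
    (D : Derivation ℤ (MvPolynomial ℕ K) (MvPolynomial ℕ K))
    (hDX : ∀ n : ℕ, D (X n) = X (n + 1))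
    (hDC : ∀ a : K, D (C a) = C (δ a))
    (P : Ideal (MvPolynomial ℕ K))
    (hPdiff : ∀ h ∈ P, D h ∈ P)
    (f : MvPolynomial ℕ K) (hfP : f ∈ P) (hf : Irreducible f)
    (hmin : ∀ g ∈ P, g ≠ 0 → toLex (rankOf f) ≤ toLex (rankOf g))
    (hs : sep f = 0) :
    ∀ i ≤ ordOf f, pderiv i f ∈ P := by
  have hDf : f ∣ D f :=
    dvd_of_mem_of_ordOf_le hfP hf hmin (hPdiff f hfP) (ordOf_derivation_le hDX hDC le_rfl hs)
  exact pderiv_mem_of_dvd_derivation hDX hDC hPdiff hfP hDf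
    (show sep f ∈ P from hs ▸ P.zero_mem)
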